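/- arXiv:gr-qc/0505157 — 6 statements merged into one kernel-verified Lean document; each statement's English description precedes it below -/
import Mathlib

section
/- With l, a₁, a₂ as above (mutually orthogonal, l null, a₁, a₂ spacelike of norm −1), the torsion tensor T_{αβγ} = Σ t_{jk}(a_j)_α(l∧a_k)_{βγ} + Σ t_j l_α(l∧a_j)_{βγ} and Weyl-type tensor W_{αβγδ} = Σ_{j,k} w_{jk}(l∧a_j)_{αβ}(l∧a_k)_{γδ} satisfy W^{ξη}{}_{κλ} T_{ημξ} = 0. -/
/-- For the generalised pp-space torsion T and Weyl-type tensor W one has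
W^{ξη}_{κλ} T_{ημξ} = 0. -/
theorem stmt7 (G Ginv : Matrix (Fin 4) (Fin 4) ℝ) (hsym : G.IsSymm)
    (hsig : ∃ P : Matrix (Fin 4) (Fin 4) ℝ, IsUnit P.det ∧
      P.transpose * G * P = Matrix.diagonal ![1, -1, -1, -1])
    (hGi : G * Ginv = 1) (hiG : Ginv * G = 1)
    (l a₁ a₂ : Fin 4 → ℝ)
    (hll : ∑ μ, ∑ ν, G μ ν * l μ * l ν = 0)
    (hla₁ : ∑ μ, ∑ ν, G μ ν * l μ * a₁ ν = 0)
    (hla₂ : ∑ μ, ∑ ν, G μ ν * l μ * a₂ ν = 0)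
    (ha₁₂ : ∑ μ, ∑ ν, G μ ν * a₁ μ * a₂ ν = 0)
    (ha₁₁ : ∑ μ, ∑ ν, G μ ν * a₁ μ * a₁ ν = -1)
    (ha₂₂ : ∑ μ, ∑ ν, G μ ν * a₂ μ * a₂ ν = -1)
    (t : Fin 2 → Fin 2 → ℝ) (ts : Fin 2 → ℝ) (wc : Fin 2 → Fin 2 → ℝ)
    (htsym : ∀ j k, t j k = t k j) (hwsym : ∀ j k, wc j k = wc k j) :
    let av : Fin 2 → Fin 4 → ℝ := ![a₁, a₂]
    let lo : (Fin 4 → ℝ) → Fin 4 → ℝ := fun u μ => ∑ ν, G μ ν * u ν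
    let wdg : Fin 2 → Fin 4 → Fin 4 → ℝ :=
      fun j β γ => lo l β * lo (av j) γ - lo (av j) β * lo l γ
    let T : Fin 4 → Fin 4 → Fin 4 → ℝ := fun α β γ =>
      (∑ j, ∑ k, t j k * lo (av j) α * wdg k β γ) + ∑ j, ts j * lo l α * wdg j β γ
    let W : Fin 4 → Fin 4 → Fin 4 → Fin 4 → ℝ := fun α β γ δ =>
      ∑ j, ∑ k, wc j k * wdg j α β * wdg k γ δ
    ∀ κ lam μ,
      ∑ ξ, ∑ η, (∑ ξ', ∑ η', Ginv ξ ξ' * Ginv η η' * W ξ' η' κ lam) * T η μ ξ = 0 := by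
  intro av lo wdg T W κ lam μ
  -- raising an index with Ginv undoes the lowering by G
  have h_up : ∀ (u : Fin 4 → ℝ) (i : Fin 4), (∑ i', Ginv i i' * lo u i') = u i := by
    intro u i
    have h1 : ∀ ν, (∑ i', Ginv i i' * G i' ν) = (1 : Matrix (Fin 4) (Fin 4) ℝ) i ν := by
      intro ν; rw [← hiG, Matrix.mul_apply]
    calc (∑ i', Ginv i i' * lo u i')
        = ∑ i', ∑ ν, Ginv i i' * G i' ν * u ν := by
          refine Finset.sum_congr rfl fun i' _ => ?_
          simp only [lo, Finset.mul_sum]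
          exact Finset.sum_congr rfl fun ν _ => by ring
      _ = ∑ ν, (∑ i', Ginv i i' * G i' ν) * u ν := by
          rw [Finset.sum_comm]
          exact Finset.sum_congr rfl fun ν _ => (Finset.sum_mul _ _ _).symm
      _ = u i := by simp [h1, Matrix.one_apply]
  -- pairing computations
  have hip : ∀ (u v : Fin 4 → ℝ), (∑ i, u i * lo v i) = ∑ m, ∑ n, G m n * u m * v n := by
    intro u v
    refine Finset.sum_congr rfl fun m _ => ?_
    simp only [lo, Finset.mul_sum]
    exact Finset.sum_congr rfl fun n _ => by ring
  have pll : (∑ i, l i * lo l i) = 0 := by rw [hip]; exact hll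
  have pla : ∀ j : Fin 2, (∑ i, l i * lo (av j) i) = 0 := by
    intro j
    fin_cases j
    · rw [hip]; simp only [av, Matrix.cons_val_zero]; exact hla₁
    · rw [hip]; simp only [av, Matrix.cons_val_one, Matrix.head_cons]; exact hla₂
  -- l contracted with the second slot of wedge vanishes
  have hlw : ∀ (k : Fin 2) (m : Fin 4), (∑ i, l i * wdg k m i) = 0 := by
    intro k m
    calc (∑ i, l i * wdg k m i)
        = lo l m * (∑ i, l i * lo (av k) i) - lo (av k) m * (∑ i, l i * lo l i) := by
          rw [Finset.mul_sum, Finset.mul_sum, ← Finset.sum_sub_distrib]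
          exact Finset.sum_congr rfl fun i _ => by simp only [wdg]; ring
      _ = 0 := by rw [pla, pll]; ring
  -- l contracted with the first index of T vanishes
  have hTl : ∀ (m ξ : Fin 4), (∑ η, l η * T η m ξ) = 0 := by
    intro m ξ
    calc (∑ η, l η * T η m ξ)
        = ∑ η, ((t 0 0 * wdg 0 m ξ + t 0 1 * wdg 1 m ξ) * (l η * lo (av 0) η)
              + (t 1 0 * wdg 0 m ξ + t 1 1 * wdg 1 m ξ) * (l η * lo (av 1) η)
              + (ts 0 * wdg 0 m ξ + ts 1 * wdg 1 m ξ) * (l η * lo l η)) := by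
          refine Finset.sum_congr rfl fun η _ => ?_
          simp only [T, Fin.sum_univ_two]; ring
      _ = (t 0 0 * wdg 0 m ξ + t 0 1 * wdg 1 m ξ) * (∑ η, l η * lo (av 0) η)
          + (t 1 0 * wdg 0 m ξ + t 1 1 * wdg 1 m ξ) * (∑ η, l η * lo (av 1) η)
          + (ts 0 * wdg 0 m ξ + ts 1 * wdg 1 m ξ) * (∑ η, l η * lo l η) := by
          rw [Finset.sum_add_distrib, Finset.sum_add_distrib, ← Finset.mul_sum,
            ← Finset.mul_sum, ← Finset.mul_sum]
      _ = 0 := by rw [pla 0, pla 1, pll]; ring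
  -- l contracted with the last index of T vanishes
  have hTl3 : ∀ (η : Fin 4), (∑ ξ, l ξ * T η μ ξ) = 0 := by
    intro η
    calc (∑ ξ, l ξ * T η μ ξ)
        = ∑ ξ, ((t 0 0 * lo (av 0) η + t 1 0 * lo (av 1) η + ts 0 * lo l η) * (l ξ * wdg 0 μ ξ)
              + (t 0 1 * lo (av 0) η + t 1 1 * lo (av 1) η + ts 1 * lo l η) * (l ξ * wdg 1 μ ξ)) := by
          refine Finset.sum_congr rfl fun ξ _ => ?_
          simp only [T, Fin.sum_univ_two]; ring
      _ = (t 0 0 * lo (av 0) η + t 1 0 * lo (av 1) η + ts 0 * lo l η) * (∑ ξ, l ξ * wdg 0 μ ξ)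
          + (t 0 1 * lo (av 0) η + t 1 1 * lo (av 1) η + ts 1 * lo l η) * (∑ ξ, l ξ * wdg 1 μ ξ) := by
          rw [Finset.sum_add_distrib, ← Finset.mul_sum, ← Finset.mul_sum]
      _ = 0 := by rw [hlw 0 μ, hlw 1 μ]; ring
  -- the Weyl tensor with both first indices raised
  have hW : ∀ ξ' η', W ξ' η' κ lam
      = lo l ξ' * ((wc 0 0 * wdg 0 κ lam + wc 0 1 * wdg 1 κ lam) * lo (av 0) η'
                 + (wc 1 0 * wdg 0 κ lam + wc 1 1 * wdg 1 κ lam) * lo (av 1) η')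
        - ((wc 0 0 * wdg 0 κ lam + wc 0 1 * wdg 1 κ lam) * lo (av 0) ξ'
         + (wc 1 0 * wdg 0 κ lam + wc 1 1 * wdg 1 κ lam) * lo (av 1) ξ') * lo l η' := by
    intro ξ' η'
    simp only [W, Fin.sum_univ_two, wdg]; ring
  have hA : ∀ ξ η, (∑ ξ', ∑ η', Ginv ξ ξ' * Ginv η η' * W ξ' η' κ lam)
      = l ξ * ((wc 0 0 * wdg 0 κ lam + wc 0 1 * wdg 1 κ lam) * av 0 η
             + (wc 1 0 * wdg 0 κ lam + wc 1 1 * wdg 1 κ lam) * av 1 η)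
        - ((wc 0 0 * wdg 0 κ lam + wc 0 1 * wdg 1 κ lam) * av 0 ξ
         + (wc 1 0 * wdg 0 κ lam + wc 1 1 * wdg 1 κ lam) * av 1 ξ) * l η := by
    intro ξ η
    have hinner : ∀ ξ', (∑ η', Ginv η η' * W ξ' η' κ lam)
        = lo l ξ' * ((wc 0 0 * wdg 0 κ lam + wc 0 1 * wdg 1 κ lam) * av 0 η
                   + (wc 1 0 * wdg 0 κ lam + wc 1 1 * wdg 1 κ lam) * av 1 η)
          - ((wc 0 0 * wdg 0 κ lam + wc 0 1 * wdg 1 κ lam) * lo (av 0) ξ'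
           + (wc 1 0 * wdg 0 κ lam + wc 1 1 * wdg 1 κ lam) * lo (av 1) ξ') * l η := by
      intro ξ'
      calc (∑ η', Ginv η η' * W ξ' η' κ lam)
          = ∑ η', ((lo l ξ' * (wc 0 0 * wdg 0 κ lam + wc 0 1 * wdg 1 κ lam)) * (Ginv η η' * lo (av 0) η')
                 + (lo l ξ' * (wc 1 0 * wdg 0 κ lam + wc 1 1 * wdg 1 κ lam)) * (Ginv η η' * lo (av 1) η')
                 + (-((wc 0 0 * wdg 0 κ lam + wc 0 1 * wdg 1 κ lam) * lo (av 0) ξ'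
                    + (wc 1 0 * wdg 0 κ lam + wc 1 1 * wdg 1 κ lam) * lo (av 1) ξ'))
                      * (Ginv η η' * lo l η')) := by
            refine Finset.sum_congr rfl fun η' _ => ?_
            rw [hW]; ring
        _ = (lo l ξ' * (wc 0 0 * wdg 0 κ lam + wc 0 1 * wdg 1 κ lam)) * (∑ η', Ginv η η' * lo (av 0) η')
            + (lo l ξ' * (wc 1 0 * wdg 0 κ lam + wc 1 1 * wdg 1 κ lam)) * (∑ η', Ginv η η' * lo (av 1) η')
            + (-((wc 0 0 * wdg 0 κ lam + wc 0 1 * wdg 1 κ lam) * lo (av 0) ξ'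
               + (wc 1 0 * wdg 0 κ lam + wc 1 1 * wdg 1 κ lam) * lo (av 1) ξ'))
                * (∑ η', Ginv η η' * lo l η') := by
            rw [Finset.sum_add_distrib, Finset.sum_add_distrib, ← Finset.mul_sum,
              ← Finset.mul_sum, ← Finset.mul_sum]
        _ = _ := by rw [h_up, h_up, h_up]; ring
    calc (∑ ξ', ∑ η', Ginv ξ ξ' * Ginv η η' * W ξ' η' κ lam)
        = ∑ ξ', Ginv ξ ξ' * (∑ η', Ginv η η' * W ξ' η' κ lam) := by
          refine Finset.sum_congr rfl fun ξ' _ => ?_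
          rw [Finset.mul_sum]
          exact Finset.sum_congr rfl fun η' _ => by ring
      _ = ∑ ξ', (((wc 0 0 * wdg 0 κ lam + wc 0 1 * wdg 1 κ lam) * av 0 η
                + (wc 1 0 * wdg 0 κ lam + wc 1 1 * wdg 1 κ lam) * av 1 η) * (Ginv ξ ξ' * lo l ξ')
              + (-((wc 0 0 * wdg 0 κ lam + wc 0 1 * wdg 1 κ lam) * l η)) * (Ginv ξ ξ' * lo (av 0) ξ')
              + (-((wc 1 0 * wdg 0 κ lam + wc 1 1 * wdg 1 κ lam) * l η)) * (Ginv ξ ξ' * lo (av 1) ξ')) := by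
          refine Finset.sum_congr rfl fun ξ' _ => ?_
          rw [hinner]; ring
      _ = ((wc 0 0 * wdg 0 κ lam + wc 0 1 * wdg 1 κ lam) * av 0 η
          + (wc 1 0 * wdg 0 κ lam + wc 1 1 * wdg 1 κ lam) * av 1 η) * (∑ ξ', Ginv ξ ξ' * lo l ξ')
          + (-((wc 0 0 * wdg 0 κ lam + wc 0 1 * wdg 1 κ lam) * l η)) * (∑ ξ', Ginv ξ ξ' * lo (av 0) ξ')
          + (-((wc 1 0 * wdg 0 κ lam + wc 1 1 * wdg 1 κ lam) * l η)) * (∑ ξ', Ginv ξ ξ' * lo (av 1) ξ') := by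
          rw [Finset.sum_add_distrib, Finset.sum_add_distrib, ← Finset.mul_sum,
            ← Finset.mul_sum, ← Finset.mul_sum]
      _ = _ := by rw [h_up, h_up, h_up]; ring
  -- final assembly
  calc (∑ ξ, ∑ η, (∑ ξ', ∑ η', Ginv ξ ξ' * Ginv η η' * W ξ' η' κ lam) * T η μ ξ)
      = ∑ η, ∑ ξ, (l ξ * ((wc 0 0 * wdg 0 κ lam + wc 0 1 * wdg 1 κ lam) * av 0 η
             + (wc 1 0 * wdg 0 κ lam + wc 1 1 * wdg 1 κ lam) * av 1 η)
        - ((wc 0 0 * wdg 0 κ lam + wc 0 1 * wdg 1 κ lam) * av 0 ξ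
         + (wc 1 0 * wdg 0 κ lam + wc 1 1 * wdg 1 κ lam) * av 1 ξ) * l η) * T η μ ξ := by
        rw [Finset.sum_comm]
        exact Finset.sum_congr rfl fun η _ => Finset.sum_congr rfl fun ξ _ => by rw [hA]
    _ = ∑ η, (((wc 0 0 * wdg 0 κ lam + wc 0 1 * wdg 1 κ lam) * av 0 η
             + (wc 1 0 * wdg 0 κ lam + wc 1 1 * wdg 1 κ lam) * av 1 η) * (∑ ξ, l ξ * T η μ ξ)
          - l η * (∑ ξ, ((wc 0 0 * wdg 0 κ lam + wc 0 1 * wdg 1 κ lam) * av 0 ξ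
             + (wc 1 0 * wdg 0 κ lam + wc 1 1 * wdg 1 κ lam) * av 1 ξ) * T η μ ξ)) := by
        refine Finset.sum_congr rfl fun η _ => ?_
        rw [Finset.mul_sum, Finset.mul_sum, ← Finset.sum_sub_distrib]
        exact Finset.sum_congr rfl fun ξ _ => by ring
    _ = ∑ η, ∑ ξ, (-((wc 0 0 * wdg 0 κ lam + wc 0 1 * wdg 1 κ lam) * av 0 ξ
             + (wc 1 0 * wdg 0 κ lam + wc 1 1 * wdg 1 κ lam) * av 1 ξ)) * (l η * T η μ ξ) := by
        refine Finset.sum_congr rfl fun η _ => ?_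
        rw [hTl3, Finset.mul_sum, mul_zero, zero_sub, ← Finset.sum_neg_distrib]
        refine Finset.sum_congr rfl fun ξ _ => by ring
    _ = ∑ ξ, (-((wc 0 0 * wdg 0 κ lam + wc 0 1 * wdg 1 κ lam) * av 0 ξ
             + (wc 1 0 * wdg 0 κ lam + wc 1 1 * wdg 1 κ lam) * av 1 ξ)) * (∑ η, l η * T η μ ξ) := by
        rw [Finset.sum_comm]
        exact Finset.sum_congr rfl fun ξ _ => (Finset.mul_sum _ _ _).symm
    _ = 0 := by
        refine Finset.sum_eq_zero fun ξ _ => ?_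
        rw [hTl μ ξ, mul_zero]
end

section
/- With l, a₁, a₂ and tensors T, W as in the generalised pp-space ansatz, the tensor E_{μκλ} := W^η{}_{μκξ}(T_η{}^ξ{}_λ − T_λ{}^ξ{}_η) + W^η{}_{μλξ}(T_κ{}^ξ{}_η − T_η{}^ξ{}_κ) vanishes identically. (Proof idea: E is proportional to l_λ l_μ l_κ and antisymmetric in κ,λ, hence zero.) -/
open Finset

private lemma push1 {α β : Type*} [Fintype α] [Fintype β] (f : α → β → ℝ) :
    ∑ x, ∑ a, f x a = ∑ a, ∑ x, f x a := Finset.sum_comm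

private lemma push2 {α β γ : Type*} [Fintype α] [Fintype β] [Fintype γ]
    (f : α → β → γ → ℝ) :
    ∑ x, ∑ a, ∑ b, f x a b = ∑ a, ∑ b, ∑ x, f x a b := by
  rw [Finset.sum_comm]
  exact Finset.sum_congr rfl fun a _ => push1 _

private lemma push3 {α β γ δ : Type*} [Fintype α] [Fintype β] [Fintype γ] [Fintype δ]
    (f : α → β → γ → δ → ℝ) :
    ∑ x, ∑ a, ∑ b, ∑ c, f x a b c = ∑ a, ∑ b, ∑ c, ∑ x, f x a b c := by
  rw [Finset.sum_comm]
  exact Finset.sum_congr rfl fun a _ => push2 _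

private lemma push4 {α β γ δ ε : Type*} [Fintype α] [Fintype β] [Fintype γ] [Fintype δ]
    [Fintype ε] (f : α → β → γ → δ → ε → ℝ) :
    ∑ x, ∑ a, ∑ b, ∑ c, ∑ d, f x a b c d = ∑ a, ∑ b, ∑ c, ∑ d, ∑ x, f x a b c d := by
  rw [Finset.sum_comm]
  exact Finset.sum_congr rfl fun a _ => push3 _

private lemma sep2 (c d : ℝ) (p q r s : Fin 4 → ℝ) :
    ∑ η, ∑ ξ, (c * p η * r ξ) * (d * q η * s ξ)
      = c * d * ((∑ η, p η * q η) * (∑ ξ, r ξ * s ξ)) := by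
  have h : ∀ η, (∑ ξ, (c * p η * r ξ) * (d * q η * s ξ))
      = (c * d) * (p η * q η) * (∑ ξ, r ξ * s ξ) := by
    intro η
    rw [Finset.mul_sum]
    exact Finset.sum_congr rfl fun ξ _ => by ring
  rw [Finset.sum_congr rfl fun η _ => h η, ← Finset.sum_mul, ← Finset.mul_sum]
  ring

private lemma core
    (lv lL : Fin 4 → ℝ) (aL : Fin 2 → Fin 4 → ℝ)
    (F Gd : Fin 2 → Fin 4 → Fin 4 → ℝ)
    (t : Fin 2 → Fin 2 → ℝ) (ts : Fin 2 → ℝ) (wc : Fin 2 → Fin 2 → ℝ)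
    (K1 : ∀ j j' μ, ∑ η, F j η μ * aL j' η = (if j = j' then (1:ℝ) else 0) * lL μ)
    (K2 : ∀ j μ, ∑ η, F j η μ * lL η = 0)
    (K3 : ∀ k κ, ∑ ξ, Gd k κ ξ * lv ξ = 0)
    (K4 : ∀ k k' κ lam, ∑ ξ, Gd k κ ξ * F k' ξ lam
        = (if k = k' then (1:ℝ) else 0) * (lL κ * lL lam))
    (K5 : ∀ j k' μ ξ, ∑ η, F j η μ * F k' ξ η
        = (if j = k' then (1:ℝ) else 0) * (lL μ * lv ξ))
    (μ κ lam : Fin 4) :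
    ∑ η, ∑ ξ,
      ((∑ j, ∑ k, wc j k * F j η μ * Gd k κ ξ) *
        (((∑ j, ∑ k, t j k * aL j η * F k ξ lam) + ∑ j, ts j * lL η * F j ξ lam)
          - ((∑ j, ∑ k, t j k * aL j lam * F k ξ η) + ∑ j, ts j * lL lam * F j ξ η))
       + (∑ j, ∑ k, wc j k * F j η μ * Gd k lam ξ) *
        (((∑ j, ∑ k, t j k * aL j κ * F k ξ η) + ∑ j, ts j * lL κ * F j ξ η)
          - ((∑ j, ∑ k, t j k * aL j η * F k ξ κ) + ∑ j, ts j * lL η * F j ξ κ)))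
      = 0 := by
  -- L1 : the "direct" contraction
  have L1 : ∀ κ' lam' : Fin 4,
      ∑ η, ∑ ξ, (∑ j, ∑ k, wc j k * F j η μ * Gd k κ' ξ) *
        (∑ j, ∑ k, t j k * aL j η * F k ξ lam')
      = (∑ j, ∑ k, wc j k * t j k) * (lL μ * (lL κ' * lL lam')) := by
    intro κ' lam'
    calc ∑ η, ∑ ξ, (∑ j, ∑ k, wc j k * F j η μ * Gd k κ' ξ) *
          (∑ j, ∑ k, t j k * aL j η * F k ξ lam')
        = ∑ η, ∑ ξ, ∑ j, ∑ j', ∑ k, ∑ k',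
            (wc j k * F j η μ * Gd k κ' ξ) * (t j' k' * aL j' η * F k' ξ lam') := by
          refine Finset.sum_congr rfl fun η _ => Finset.sum_congr rfl fun ξ _ => ?_
          rw [Finset.sum_mul_sum]
          exact Finset.sum_congr rfl fun j _ => Finset.sum_congr rfl fun j' _ =>
            Finset.sum_mul_sum _ _ _ _
      _ = ∑ j, ∑ j', ∑ k, ∑ k', ∑ η, ∑ ξ,
            (wc j k * F j η μ * Gd k κ' ξ) * (t j' k' * aL j' η * F k' ξ lam') := by
          rw [Finset.sum_congr rfl fun η _ => push4 _]
          exact push4 _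
      _ = ∑ j, ∑ j', ∑ k, ∑ k', wc j k * t j' k' *
            ((∑ η, F j η μ * aL j' η) * (∑ ξ, Gd k κ' ξ * F k' ξ lam')) := by
          refine Finset.sum_congr rfl fun j _ => Finset.sum_congr rfl fun j' _ =>
            Finset.sum_congr rfl fun k _ => Finset.sum_congr rfl fun k' _ => ?_
          exact sep2 (wc j k) (t j' k') (fun η => F j η μ) (aL j') (Gd k κ')
            (fun ξ => F k' ξ lam')
      _ = ∑ j, ∑ j', ∑ k, ∑ k', wc j k * t j' k' *
            (((if j = j' then (1:ℝ) else 0) * lL μ) *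
              ((if k = k' then (1:ℝ) else 0) * (lL κ' * lL lam'))) := by
          simp only [K1, K4]
      _ = (∑ j, ∑ k, wc j k * t j k) * (lL μ * (lL κ' * lL lam')) := by
          simp [Fin.sum_univ_two]
          ring
  -- L2 : ts-part of direct contraction vanishes
  have L2 : ∀ κ' lam' : Fin 4,
      ∑ η, ∑ ξ, (∑ j, ∑ k, wc j k * F j η μ * Gd k κ' ξ) *
        (∑ j, ts j * lL η * F j ξ lam') = 0 := by
    intro κ' lam'
    have step : ∀ η ξ, (∑ j, ∑ k, wc j k * F j η μ * Gd k κ' ξ) *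
        (∑ j, ts j * lL η * F j ξ lam')
        = ∑ j, ∑ j', ∑ k, (wc j k * F j η μ * Gd k κ' ξ) * (ts j' * lL η * F j' ξ lam') := by
      intro η ξ
      rw [Finset.sum_mul_sum]
      exact Finset.sum_congr rfl fun j _ => Finset.sum_congr rfl fun j' _ =>
        Finset.sum_mul _ _ _
    calc ∑ η, ∑ ξ, (∑ j, ∑ k, wc j k * F j η μ * Gd k κ' ξ) *
          (∑ j, ts j * lL η * F j ξ lam')
        = ∑ η, ∑ ξ, ∑ j, ∑ j', ∑ k,
            (wc j k * F j η μ * Gd k κ' ξ) * (ts j' * lL η * F j' ξ lam') := by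
          exact Finset.sum_congr rfl fun η _ => Finset.sum_congr rfl fun ξ _ => step η ξ
      _ = ∑ j, ∑ j', ∑ k, ∑ η, ∑ ξ,
            (wc j k * F j η μ * Gd k κ' ξ) * (ts j' * lL η * F j' ξ lam') := by
          rw [Finset.sum_congr rfl fun η _ => push3 _]
          exact push3 _
      _ = 0 := by
          have hz : ∀ j j' k, (∑ η, ∑ ξ,
              (wc j k * F j η μ * Gd k κ' ξ) * (ts j' * lL η * F j' ξ lam')) = 0 := by
            intro j j' k
            rw [sep2 (wc j k) (ts j') (fun η => F j η μ) lL (Gd k κ')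
              (fun ξ => F j' ξ lam'), K2, zero_mul, mul_zero]
          simp only [hz, Finset.sum_const_zero]
  -- L3 : crossed contraction with t-part vanishes
  have L3 : ∀ κ' lam' : Fin 4,
      ∑ η, ∑ ξ, (∑ j, ∑ k, wc j k * F j η μ * Gd k κ' ξ) *
        (∑ j, ∑ k, t j k * aL j lam' * F k ξ η) = 0 := by
    intro κ' lam'
    have hin : ∀ j j' k k', (∑ η, ∑ ξ,
        (wc j k * F j η μ * Gd k κ' ξ) * (t j' k' * aL j' lam' * F k' ξ η)) = 0 := by
      intro j j' k k'
      rw [Finset.sum_comm]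
      have h1 : ∀ ξ, (∑ η, (wc j k * F j η μ * Gd k κ' ξ) * (t j' k' * aL j' lam' * F k' ξ η))
          = (wc j k * (t j' k' * aL j' lam') *
              ((if j = k' then (1:ℝ) else 0) * lL μ)) * (Gd k κ' ξ * lv ξ) := by
        intro ξ
        calc ∑ η, (wc j k * F j η μ * Gd k κ' ξ) * (t j' k' * aL j' lam' * F k' ξ η)
            = (wc j k * Gd k κ' ξ * (t j' k' * aL j' lam')) * ∑ η, F j η μ * F k' ξ η := by
              rw [Finset.mul_sum]
              exact Finset.sum_congr rfl fun η _ => by ring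
          _ = _ := by rw [K5]; ring
      rw [Finset.sum_congr rfl fun ξ _ => h1 ξ, ← Finset.mul_sum, K3, mul_zero]
    calc ∑ η, ∑ ξ, (∑ j, ∑ k, wc j k * F j η μ * Gd k κ' ξ) *
          (∑ j, ∑ k, t j k * aL j lam' * F k ξ η)
        = ∑ η, ∑ ξ, ∑ j, ∑ j', ∑ k, ∑ k',
            (wc j k * F j η μ * Gd k κ' ξ) * (t j' k' * aL j' lam' * F k' ξ η) := by
          refine Finset.sum_congr rfl fun η _ => Finset.sum_congr rfl fun ξ _ => ?_
          rw [Finset.sum_mul_sum]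
          exact Finset.sum_congr rfl fun j _ => Finset.sum_congr rfl fun j' _ =>
            Finset.sum_mul_sum _ _ _ _
      _ = ∑ j, ∑ j', ∑ k, ∑ k', ∑ η, ∑ ξ,
            (wc j k * F j η μ * Gd k κ' ξ) * (t j' k' * aL j' lam' * F k' ξ η) := by
          rw [Finset.sum_congr rfl fun η _ => push4 _]
          exact push4 _
      _ = 0 := by simp only [hin, Finset.sum_const_zero]
  -- L4 : crossed contraction with ts-part vanishes
  have L4 : ∀ κ' lam' : Fin 4,
      ∑ η, ∑ ξ, (∑ j, ∑ k, wc j k * F j η μ * Gd k κ' ξ) *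
        (∑ j, ts j * lL lam' * F j ξ η) = 0 := by
    intro κ' lam'
    have hin : ∀ j j' k, (∑ η, ∑ ξ,
        (wc j k * F j η μ * Gd k κ' ξ) * (ts j' * lL lam' * F j' ξ η)) = 0 := by
      intro j j' k
      rw [Finset.sum_comm]
      have h1 : ∀ ξ, (∑ η, (wc j k * F j η μ * Gd k κ' ξ) * (ts j' * lL lam' * F j' ξ η))
          = (wc j k * (ts j' * lL lam') *
              ((if j = j' then (1:ℝ) else 0) * lL μ)) * (Gd k κ' ξ * lv ξ) := by
        intro ξ
        calc ∑ η, (wc j k * F j η μ * Gd k κ' ξ) * (ts j' * lL lam' * F j' ξ η)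
            = (wc j k * Gd k κ' ξ * (ts j' * lL lam')) * ∑ η, F j η μ * F j' ξ η := by
              rw [Finset.mul_sum]
              exact Finset.sum_congr rfl fun η _ => by ring
          _ = _ := by rw [K5]; ring
      rw [Finset.sum_congr rfl fun ξ _ => h1 ξ, ← Finset.mul_sum, K3, mul_zero]
    have step : ∀ η ξ, (∑ j, ∑ k, wc j k * F j η μ * Gd k κ' ξ) *
        (∑ j, ts j * lL lam' * F j ξ η)
        = ∑ j, ∑ j', ∑ k, (wc j k * F j η μ * Gd k κ' ξ) * (ts j' * lL lam' * F j' ξ η) := by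
      intro η ξ
      rw [Finset.sum_mul_sum]
      exact Finset.sum_congr rfl fun j _ => Finset.sum_congr rfl fun j' _ =>
        Finset.sum_mul _ _ _
    calc ∑ η, ∑ ξ, (∑ j, ∑ k, wc j k * F j η μ * Gd k κ' ξ) *
          (∑ j, ts j * lL lam' * F j ξ η)
        = ∑ η, ∑ ξ, ∑ j, ∑ j', ∑ k,
            (wc j k * F j η μ * Gd k κ' ξ) * (ts j' * lL lam' * F j' ξ η) := by
          exact Finset.sum_congr rfl fun η _ => Finset.sum_congr rfl fun ξ _ => step η ξ
      _ = ∑ j, ∑ j', ∑ k, ∑ η, ∑ ξ,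
            (wc j k * F j η μ * Gd k κ' ξ) * (ts j' * lL lam' * F j' ξ η) := by
          rw [Finset.sum_congr rfl fun η _ => push3 _]
          exact push3 _
      _ = 0 := by simp only [hin, Finset.sum_const_zero]
  -- assemble
  have expand : ∀ η ξ : Fin 4,
      ((∑ j, ∑ k, wc j k * F j η μ * Gd k κ ξ) *
        (((∑ j, ∑ k, t j k * aL j η * F k ξ lam) + ∑ j, ts j * lL η * F j ξ lam)
          - ((∑ j, ∑ k, t j k * aL j lam * F k ξ η) + ∑ j, ts j * lL lam * F j ξ η))
       + (∑ j, ∑ k, wc j k * F j η μ * Gd k lam ξ) *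
        (((∑ j, ∑ k, t j k * aL j κ * F k ξ η) + ∑ j, ts j * lL κ * F j ξ η)
          - ((∑ j, ∑ k, t j k * aL j η * F k ξ κ) + ∑ j, ts j * lL η * F j ξ κ)))
      = ((∑ j, ∑ k, wc j k * F j η μ * Gd k κ ξ) * (∑ j, ∑ k, t j k * aL j η * F k ξ lam)
          + (∑ j, ∑ k, wc j k * F j η μ * Gd k κ ξ) * (∑ j, ts j * lL η * F j ξ lam)
          - (∑ j, ∑ k, wc j k * F j η μ * Gd k κ ξ) * (∑ j, ∑ k, t j k * aL j lam * F k ξ η)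
          - (∑ j, ∑ k, wc j k * F j η μ * Gd k κ ξ) * (∑ j, ts j * lL lam * F j ξ η))
        + ((∑ j, ∑ k, wc j k * F j η μ * Gd k lam ξ) * (∑ j, ∑ k, t j k * aL j κ * F k ξ η)
          + (∑ j, ∑ k, wc j k * F j η μ * Gd k lam ξ) * (∑ j, ts j * lL κ * F j ξ η)
          - (∑ j, ∑ k, wc j k * F j η μ * Gd k lam ξ) * (∑ j, ∑ k, t j k * aL j η * F k ξ κ)
          - (∑ j, ∑ k, wc j k * F j η μ * Gd k lam ξ) * (∑ j, ts j * lL η * F j ξ κ)) := by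
    intro η ξ; ring
  rw [Finset.sum_congr rfl fun η _ => Finset.sum_congr rfl fun ξ _ => expand η ξ]
  simp only [Finset.sum_add_distrib, Finset.sum_sub_distrib]
  rw [L1 κ lam, L2 κ lam, L3 κ lam, L4 κ lam, L1 lam κ, L2 lam κ, L3 lam κ, L4 lam κ]
  ring

private lemma main (Ginv : Matrix (Fin 4) (Fin 4) ℝ)
    (lv : Fin 4 → ℝ) (av : Fin 2 → Fin 4 → ℝ)
    (lL : Fin 4 → ℝ) (aL : Fin 2 → Fin 4 → ℝ)
    (t : Fin 2 → Fin 2 → ℝ) (ts : Fin 2 → ℝ) (wc : Fin 2 → Fin 2 → ℝ)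
    (hup_l : ∀ η, ∑ η', Ginv η η' * lL η' = lv η)
    (hup_a : ∀ j η, ∑ η', Ginv η η' * aL j η' = av j η)
    (h1 : ∑ η, lv η * lL η = 0)
    (h2 : ∀ j, ∑ η, lv η * aL j η = 0)
    (h3 : ∀ j, ∑ η, av j η * lL η = 0)
    (h4 : ∀ j k, ∑ η, av j η * aL k η = -(if j = k then (1:ℝ) else 0)) :
    ∀ μ κ lam : Fin 4,
    ∑ η, ∑ ξ,
      ((∑ η', Ginv η η' * (∑ j, ∑ k, wc j k * (lL η' * aL j μ - aL j η' * lL μ)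
          * (lL κ * aL k ξ - aL k κ * lL ξ))) *
        ((∑ ξ', Ginv ξ ξ' * ((∑ j, ∑ k, t j k * aL j η * (lL ξ' * aL k lam - aL k ξ' * lL lam))
            + ∑ j, ts j * lL η * (lL ξ' * aL j lam - aL j ξ' * lL lam)))
         - (∑ ξ', Ginv ξ ξ' * ((∑ j, ∑ k, t j k * aL j lam * (lL ξ' * aL k η - aL k ξ' * lL η))
            + ∑ j, ts j * lL lam * (lL ξ' * aL j η - aL j ξ' * lL η))))
       + (∑ η', Ginv η η' * (∑ j, ∑ k, wc j k * (lL η' * aL j μ - aL j η' * lL μ)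
          * (lL lam * aL k ξ - aL k lam * lL ξ))) *
        ((∑ ξ', Ginv ξ ξ' * ((∑ j, ∑ k, t j k * aL j κ * (lL ξ' * aL k η - aL k ξ' * lL η))
            + ∑ j, ts j * lL κ * (lL ξ' * aL j η - aL j ξ' * lL η)))
         - (∑ ξ', Ginv ξ ξ' * ((∑ j, ∑ k, t j k * aL j η * (lL ξ' * aL k κ - aL k ξ' * lL κ))
            + ∑ j, ts j * lL η * (lL ξ' * aL j κ - aL j ξ' * lL κ))))) = 0 := by
  intro μ κ lam
  -- raising lemma
  have hraise : ∀ (c X Y : ℝ) (j : Fin 2) (η : Fin 4),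
      ∑ η', Ginv η η' * (c * (lL η' * X - aL j η' * Y)) = c * (lv η * X - av j η * Y) := by
    intro c X Y j η
    calc ∑ η', Ginv η η' * (c * (lL η' * X - aL j η' * Y))
        = ∑ η', ((c * X) * (Ginv η η' * lL η') - (c * Y) * (Ginv η η' * aL j η')) :=
          Finset.sum_congr rfl fun η' _ => by ring
      _ = (c * X) * (∑ η', Ginv η η' * lL η') - (c * Y) * (∑ η', Ginv η η' * aL j η') := by
          rw [Finset.sum_sub_distrib, ← Finset.mul_sum, ← Finset.mul_sum]
      _ = c * (lv η * X - av j η * Y) := by rw [hup_l η, hup_a j η]; ring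
  -- closed form of raised W
  have hW : ∀ (η μ' κ' ξ : Fin 4),
      (∑ η', Ginv η η' * (∑ j, ∑ k, wc j k * (lL η' * aL j μ' - aL j η' * lL μ')
          * (lL κ' * aL k ξ - aL k κ' * lL ξ)))
      = ∑ j, ∑ k, wc j k * (lv η * aL j μ' - av j η * lL μ')
          * (lL κ' * aL k ξ - aL k κ' * lL ξ) := by
    intro η μ' κ' ξ
    calc (∑ η', Ginv η η' * (∑ j, ∑ k, wc j k * (lL η' * aL j μ' - aL j η' * lL μ')
            * (lL κ' * aL k ξ - aL k κ' * lL ξ)))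
        = ∑ j, ∑ k, ∑ η', Ginv η η' * (wc j k * (lL η' * aL j μ' - aL j η' * lL μ')
            * (lL κ' * aL k ξ - aL k κ' * lL ξ)) := by
          simp only [Finset.mul_sum]
          exact push2 _
      _ = ∑ j, ∑ k, wc j k * (lv η * aL j μ' - av j η * lL μ')
            * (lL κ' * aL k ξ - aL k κ' * lL ξ) := by
          refine Finset.sum_congr rfl fun j _ => Finset.sum_congr rfl fun k _ => ?_
          set Z := lL κ' * aL k ξ - aL k κ' * lL ξ with hZ
          calc ∑ η', Ginv η η' * (wc j k * (lL η' * aL j μ' - aL j η' * lL μ') * Z)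
              = ∑ η', Ginv η η' * ((wc j k * Z) * (lL η' * aL j μ' - aL j η' * lL μ')) :=
                Finset.sum_congr rfl fun η' _ => by ring
            _ = (wc j k * Z) * (lv η * aL j μ' - av j η * lL μ') :=
                hraise (wc j k * Z) (aL j μ') (lL μ') j η
            _ = wc j k * (lv η * aL j μ' - av j η * lL μ') * Z := by ring
  -- closed form of T with raised middle index
  have hT : ∀ (η ξ lam' : Fin 4),
      (∑ ξ', Ginv ξ ξ' * ((∑ j, ∑ k, t j k * aL j η * (lL ξ' * aL k lam' - aL k ξ' * lL lam'))
          + ∑ j, ts j * lL η * (lL ξ' * aL j lam' - aL j ξ' * lL lam')))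
      = (∑ j, ∑ k, t j k * aL j η * (lv ξ * aL k lam' - av k ξ * lL lam'))
          + ∑ j, ts j * lL η * (lv ξ * aL j lam' - av j ξ * lL lam') := by
    intro η ξ lam'
    have hA : (∑ ξ', Ginv ξ ξ' *
        (∑ j, ∑ k, t j k * aL j η * (lL ξ' * aL k lam' - aL k ξ' * lL lam')))
        = ∑ j, ∑ k, t j k * aL j η * (lv ξ * aL k lam' - av k ξ * lL lam') := by
      calc (∑ ξ', Ginv ξ ξ' *
            (∑ j, ∑ k, t j k * aL j η * (lL ξ' * aL k lam' - aL k ξ' * lL lam')))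
          = ∑ j, ∑ k, ∑ ξ', Ginv ξ ξ' *
              (t j k * aL j η * (lL ξ' * aL k lam' - aL k ξ' * lL lam')) := by
            simp only [Finset.mul_sum]
            exact push2 _
        _ = ∑ j, ∑ k, t j k * aL j η * (lv ξ * aL k lam' - av k ξ * lL lam') := by
            refine Finset.sum_congr rfl fun j _ => Finset.sum_congr rfl fun k _ => ?_
            exact hraise (t j k * aL j η) (aL k lam') (lL lam') k ξ
    have hB : (∑ ξ', Ginv ξ ξ' *
        (∑ j, ts j * lL η * (lL ξ' * aL j lam' - aL j ξ' * lL lam')))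
        = ∑ j, ts j * lL η * (lv ξ * aL j lam' - av j ξ * lL lam') := by
      calc (∑ ξ', Ginv ξ ξ' *
            (∑ j, ts j * lL η * (lL ξ' * aL j lam' - aL j ξ' * lL lam')))
          = ∑ j, ∑ ξ', Ginv ξ ξ' *
              (ts j * lL η * (lL ξ' * aL j lam' - aL j ξ' * lL lam')) := by
            simp only [Finset.mul_sum]
            exact push1 _
        _ = ∑ j, ts j * lL η * (lv ξ * aL j lam' - av j ξ * lL lam') := by
            refine Finset.sum_congr rfl fun j _ => ?_
            exact hraise (ts j * lL η) (aL j lam') (lL lam') j ξ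
    simp only [mul_add, Finset.sum_add_distrib, hA, hB]
  simp only [hW, hT]
  -- the K-facts for the core lemma
  have h1' : ∑ ξ, lL ξ * lv ξ = 0 := by
    rw [Finset.sum_congr rfl fun ξ _ => mul_comm (lL ξ) (lv ξ)]; exact h1
  have h2' : ∀ k, ∑ ξ, aL k ξ * lv ξ = 0 := by
    intro k
    rw [Finset.sum_congr rfl fun ξ _ => mul_comm (aL k ξ) (lv ξ)]; exact h2 k
  have K1 : ∀ (j j' : Fin 2) (μ' : Fin 4),
      ∑ η, (lv η * aL j μ' - av j η * lL μ') * aL j' η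
        = (if j = j' then (1:ℝ) else 0) * lL μ' := by
    intro j j' μ'
    calc ∑ η, (lv η * aL j μ' - av j η * lL μ') * aL j' η
        = aL j μ' * (∑ η, lv η * aL j' η) - lL μ' * (∑ η, av j η * aL j' η) := by
          rw [Finset.mul_sum, Finset.mul_sum, ← Finset.sum_sub_distrib]
          exact Finset.sum_congr rfl fun η _ => by ring
      _ = (if j = j' then (1:ℝ) else 0) * lL μ' := by rw [h2 j', h4 j j']; ring
  have K2 : ∀ (j : Fin 2) (μ' : Fin 4),
      ∑ η, (lv η * aL j μ' - av j η * lL μ') * lL η = 0 := by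
    intro j μ'
    calc ∑ η, (lv η * aL j μ' - av j η * lL μ') * lL η
        = aL j μ' * (∑ η, lv η * lL η) - lL μ' * (∑ η, av j η * lL η) := by
          rw [Finset.mul_sum, Finset.mul_sum, ← Finset.sum_sub_distrib]
          exact Finset.sum_congr rfl fun η _ => by ring
      _ = 0 := by rw [h1, h3 j]; ring
  have K3 : ∀ (k : Fin 2) (κ' : Fin 4),
      ∑ ξ, (lL κ' * aL k ξ - aL k κ' * lL ξ) * lv ξ = 0 := by
    intro k κ'
    calc ∑ ξ, (lL κ' * aL k ξ - aL k κ' * lL ξ) * lv ξ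
        = lL κ' * (∑ ξ, aL k ξ * lv ξ) - aL k κ' * (∑ ξ, lL ξ * lv ξ) := by
          rw [Finset.mul_sum, Finset.mul_sum, ← Finset.sum_sub_distrib]
          exact Finset.sum_congr rfl fun ξ _ => by ring
      _ = 0 := by rw [h1', h2' k]; ring
  have K4 : ∀ (k k' : Fin 2) (κ' lam' : Fin 4),
      ∑ ξ, (lL κ' * aL k ξ - aL k κ' * lL ξ) * (lv ξ * aL k' lam' - av k' ξ * lL lam')
        = (if k = k' then (1:ℝ) else 0) * (lL κ' * lL lam') := by
    intro k k' κ' lam'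
    calc ∑ ξ, (lL κ' * aL k ξ - aL k κ' * lL ξ) * (lv ξ * aL k' lam' - av k' ξ * lL lam')
        = (lL κ' * aL k' lam') * (∑ ξ, lv ξ * aL k ξ)
            - (lL κ' * lL lam') * (∑ ξ, av k' ξ * aL k ξ)
            - (aL k κ' * aL k' lam') * (∑ ξ, lv ξ * lL ξ)
            + (aL k κ' * lL lam') * (∑ ξ, av k' ξ * lL ξ) := by
          rw [Finset.mul_sum, Finset.mul_sum, Finset.mul_sum, Finset.mul_sum,
            ← Finset.sum_sub_distrib, ← Finset.sum_sub_distrib, ← Finset.sum_add_distrib]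
          exact Finset.sum_congr rfl fun ξ _ => by ring
      _ = (if k = k' then (1:ℝ) else 0) * (lL κ' * lL lam') := by
          rw [h2 k, h4 k' k, h1, h3 k']
          rcases eq_or_ne k k' with h | h
          · subst h; simp
          · simp [h, Ne.symm h]
  have K5 : ∀ (j k' : Fin 2) (μ' ξ : Fin 4),
      ∑ η, (lv η * aL j μ' - av j η * lL μ') * (lv ξ * aL k' η - av k' ξ * lL η)
        = (if j = k' then (1:ℝ) else 0) * (lL μ' * lv ξ) := by
    intro j k' μ' ξ
    calc ∑ η, (lv η * aL j μ' - av j η * lL μ') * (lv ξ * aL k' η - av k' ξ * lL η)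
        = (aL j μ' * lv ξ) * (∑ η, lv η * aL k' η)
            - (aL j μ' * av k' ξ) * (∑ η, lv η * lL η)
            - (lL μ' * lv ξ) * (∑ η, av j η * aL k' η)
            + (lL μ' * av k' ξ) * (∑ η, av j η * lL η) := by
          rw [Finset.mul_sum, Finset.mul_sum, Finset.mul_sum, Finset.mul_sum,
            ← Finset.sum_sub_distrib, ← Finset.sum_sub_distrib, ← Finset.sum_add_distrib]
          exact Finset.sum_congr rfl fun η _ => by ring
      _ = (if j = k' then (1:ℝ) else 0) * (lL μ' * lv ξ) := by
          rw [h2 k', h1, h4 j k', h3 j]; ring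
  exact core lv lL aL
    (fun j η μ' => lv η * aL j μ' - av j η * lL μ')
    (fun k κ' ξ => lL κ' * aL k ξ - aL k κ' * lL ξ)
    t ts wc K1 K2 K3 K4 K5 μ κ lam

/-- The tensor E_{μκλ} := W^η_{μκξ}(T_η^ξ_λ - T_λ^ξ_η) + W^η_{μλξ}(T_κ^ξ_η - T_η^ξ_κ)
built from the generalised pp-space torsion T and Weyl-type tensor W vanishes. -/
theorem stmt8 (G Ginv : Matrix (Fin 4) (Fin 4) ℝ) (hsym : G.IsSymm)
    (hsig : ∃ P : Matrix (Fin 4) (Fin 4) ℝ, IsUnit P.det ∧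
      P.transpose * G * P = Matrix.diagonal ![1, -1, -1, -1])
    (hGi : G * Ginv = 1) (hiG : Ginv * G = 1)
    (l a₁ a₂ : Fin 4 → ℝ)
    (hll : ∑ μ, ∑ ν, G μ ν * l μ * l ν = 0)
    (hla₁ : ∑ μ, ∑ ν, G μ ν * l μ * a₁ ν = 0)
    (hla₂ : ∑ μ, ∑ ν, G μ ν * l μ * a₂ ν = 0)
    (ha₁₂ : ∑ μ, ∑ ν, G μ ν * a₁ μ * a₂ ν = 0)
    (ha₁₁ : ∑ μ, ∑ ν, G μ ν * a₁ μ * a₁ ν = -1)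
    (ha₂₂ : ∑ μ, ∑ ν, G μ ν * a₂ μ * a₂ ν = -1)
    (t : Fin 2 → Fin 2 → ℝ) (ts : Fin 2 → ℝ) (wc : Fin 2 → Fin 2 → ℝ)
    (htsym : ∀ j k, t j k = t k j) (hwsym : ∀ j k, wc j k = wc k j) :
    let av : Fin 2 → Fin 4 → ℝ := ![a₁, a₂]
    let lo : (Fin 4 → ℝ) → Fin 4 → ℝ := fun u μ => ∑ ν, G μ ν * u ν
    let wdg : Fin 2 → Fin 4 → Fin 4 → ℝ :=
      fun j β γ => lo l β * lo (av j) γ - lo (av j) β * lo l γ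
    let T : Fin 4 → Fin 4 → Fin 4 → ℝ := fun α β γ =>
      (∑ j, ∑ k, t j k * lo (av j) α * wdg k β γ) + ∑ j, ts j * lo l α * wdg j β γ
    let W : Fin 4 → Fin 4 → Fin 4 → Fin 4 → ℝ := fun α β γ δ =>
      ∑ j, ∑ k, wc j k * wdg j α β * wdg k γ δ
    -- W with first index raised, T with middle index raised
    let Wup1 : Fin 4 → Fin 4 → Fin 4 → Fin 4 → ℝ := fun η μ κ ξ =>
      ∑ η', Ginv η η' * W η' μ κ ξ
    let Tm : Fin 4 → Fin 4 → Fin 4 → ℝ := fun η ξ lam =>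
      ∑ ξ', Ginv ξ ξ' * T η ξ' lam
    ∀ μ κ lam,
      ∑ η, ∑ ξ, (Wup1 η μ κ ξ * (Tm η ξ lam - Tm lam ξ η)
        + Wup1 η μ lam ξ * (Tm κ ξ η - Tm η ξ κ)) = 0 := by
  intro av lo wdg T W Wup1 Tm
  have hGsym : ∀ i j, G i j = G j i := fun i j => by
    conv_lhs => rw [← hsym]
    rfl
  have hup : ∀ (u : Fin 4 → ℝ) (η : Fin 4),
      (∑ η', Ginv η η' * ∑ ν, G η' ν * u ν) = u η := by
    intro u η
    calc (∑ η', Ginv η η' * ∑ ν, G η' ν * u ν)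
        = ∑ η', ∑ ν, Ginv η η' * (G η' ν * u ν) := by
          simp only [Finset.mul_sum]
      _ = ∑ ν, (∑ η', Ginv η η' * G η' ν) * u ν := by
          rw [Finset.sum_comm]
          exact Finset.sum_congr rfl fun ν _ => by
            rw [Finset.sum_mul]
            exact Finset.sum_congr rfl fun η' _ => by ring
      _ = ∑ ν, (1 : Matrix (Fin 4) (Fin 4) ℝ) η ν * u ν := by
          refine Finset.sum_congr rfl fun ν _ => ?_
          rw [← hiG]
          simp [Matrix.mul_apply]
      _ = u η := by simp [Matrix.one_apply]
  have iplem : ∀ u v : Fin 4 → ℝ,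
      (∑ η, u η * ∑ ν, G η ν * v ν) = ∑ μ, ∑ ν, G μ ν * u μ * v ν := by
    intro u v
    refine Finset.sum_congr rfl fun η _ => ?_
    rw [Finset.mul_sum]
    exact Finset.sum_congr rfl fun ν _ => by ring
  have swap : ∀ u v : Fin 4 → ℝ,
      (∑ μ, ∑ ν, G μ ν * u μ * v ν) = ∑ μ, ∑ ν, G μ ν * v μ * u ν := by
    intro u v
    rw [Finset.sum_comm]
    exact Finset.sum_congr rfl fun x _ => Finset.sum_congr rfl fun y _ => by
      rw [hGsym y x]; ring
  have h1 : ∑ η, l η * (∑ ν, G η ν * l ν) = 0 := by rw [iplem]; exact hll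
  have h2 : ∀ j : Fin 2, ∑ η, l η * (∑ ν, G η ν * (![a₁, a₂] j) ν) = 0 := by
    intro j
    fin_cases j
    · show ∑ η, l η * (∑ ν, G η ν * a₁ ν) = 0
      rw [iplem]; exact hla₁
    · show ∑ η, l η * (∑ ν, G η ν * a₂ ν) = 0
      rw [iplem]; exact hla₂
  have h3 : ∀ j : Fin 2, ∑ η, (![a₁, a₂] j) η * (∑ ν, G η ν * l ν) = 0 := by
    intro j
    fin_cases j
    · show ∑ η, a₁ η * (∑ ν, G η ν * l ν) = 0
      rw [iplem, swap]; exact hla₁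
    · show ∑ η, a₂ η * (∑ ν, G η ν * l ν) = 0
      rw [iplem, swap]; exact hla₂
  have h4 : ∀ j k : Fin 2, ∑ η, (![a₁, a₂] j) η * (∑ ν, G η ν * (![a₁, a₂] k) ν)
      = -(if j = k then (1:ℝ) else 0) := by
    intro j k
    fin_cases j <;> fin_cases k
    · show ∑ η, a₁ η * (∑ ν, G η ν * a₁ ν) = -(1:ℝ)
      rw [iplem]; simpa using ha₁₁
    · show ∑ η, a₁ η * (∑ ν, G η ν * a₂ ν) = -(0:ℝ)
      rw [iplem, ha₁₂]; norm_num
    · show ∑ η, a₂ η * (∑ ν, G η ν * a₁ ν) = -(0:ℝ)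
      rw [iplem, swap, ha₁₂]; norm_num
    · show ∑ η, a₂ η * (∑ ν, G η ν * a₂ ν) = -(1:ℝ)
      rw [iplem]; simpa using ha₂₂
  exact main Ginv l ![a₁, a₂] (fun μ => ∑ ν, G μ ν * l ν)
    (fun j μ => ∑ ν, G μ ν * (![a₁, a₂] j) ν) t ts wc
    (fun η => hup l η) (fun j η => hup (![a₁, a₂] j) η) h1 h2 h3 h4
end

section
/- With l, a₁, a₂ and W as in the generalised pp-space ansatz, all triple contractions of W with T vanish: W^{ηζ}{}_{κξ}(T_η{}^ξ{}_ζ − T_ζ{}^ξ{}_η) = 0. -/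
/-- All triple contractions of W with T vanish:
W^{ηζ}_{κξ}(T_η^ξ_ζ - T_ζ^ξ_η) = 0 for the generalised pp-space ansatz. -/
theorem stmt9 (G Ginv : Matrix (Fin 4) (Fin 4) ℝ) (hsym : G.IsSymm)
    (hsig : ∃ P : Matrix (Fin 4) (Fin 4) ℝ, IsUnit P.det ∧
      P.transpose * G * P = Matrix.diagonal ![1, -1, -1, -1])
    (hGi : G * Ginv = 1) (hiG : Ginv * G = 1)
    (l a₁ a₂ : Fin 4 → ℝ)
    (hll : ∑ μ, ∑ ν, G μ ν * l μ * l ν = 0)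
    (hla₁ : ∑ μ, ∑ ν, G μ ν * l μ * a₁ ν = 0)
    (hla₂ : ∑ μ, ∑ ν, G μ ν * l μ * a₂ ν = 0)
    (ha₁₂ : ∑ μ, ∑ ν, G μ ν * a₁ μ * a₂ ν = 0)
    (ha₁₁ : ∑ μ, ∑ ν, G μ ν * a₁ μ * a₁ ν = -1)
    (ha₂₂ : ∑ μ, ∑ ν, G μ ν * a₂ μ * a₂ ν = -1)
    (t : Fin 2 → Fin 2 → ℝ) (ts : Fin 2 → ℝ) (wc : Fin 2 → Fin 2 → ℝ)
    (htsym : ∀ j k, t j k = t k j) (hwsym : ∀ j k, wc j k = wc k j) :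
    let av : Fin 2 → Fin 4 → ℝ := ![a₁, a₂]
    let lo : (Fin 4 → ℝ) → Fin 4 → ℝ := fun u μ => ∑ ν, G μ ν * u ν
    let wdg : Fin 2 → Fin 4 → Fin 4 → ℝ :=
      fun j β γ => lo l β * lo (av j) γ - lo (av j) β * lo l γ
    let T : Fin 4 → Fin 4 → Fin 4 → ℝ := fun α β γ =>
      (∑ j, ∑ k, t j k * lo (av j) α * wdg k β γ) + ∑ j, ts j * lo l α * wdg j β γ
    let W : Fin 4 → Fin 4 → Fin 4 → Fin 4 → ℝ := fun α β γ δ =>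
      ∑ j, ∑ k, wc j k * wdg j α β * wdg k γ δ
    -- W with first two indices raised, T with middle index raised
    let Wup2 : Fin 4 → Fin 4 → Fin 4 → Fin 4 → ℝ := fun η ζ κ ξ =>
      ∑ η', ∑ ζ', Ginv η η' * Ginv ζ ζ' * W η' ζ' κ ξ
    let Tm : Fin 4 → Fin 4 → Fin 4 → ℝ := fun η ξ ζ =>
      ∑ ξ', Ginv ξ ξ' * T η ξ' ζ
    ∀ κ, ∑ η, ∑ ζ, ∑ ξ, Wup2 η ζ κ ξ * (Tm η ξ ζ - Tm ζ ξ η) = 0 := by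
  intro av lo wdg T W Wup2 Tm κ
  -- basic dot-product facts: l is null and orthogonal to a₁, a₂
  have d1 : ∑ μ, l μ * lo l μ = 0 := by
    have h : ∑ μ, l μ * lo l μ = ∑ μ, ∑ ν, G μ ν * l μ * l ν :=
      Finset.sum_congr rfl fun μ _ => by
        simp only [lo]; rw [Finset.mul_sum]
        exact Finset.sum_congr rfl fun ν _ => by ring
    rw [h, hll]
  have d2 : ∀ j : Fin 2, ∑ μ, l μ * lo (av j) μ = 0 := by
    intro j
    have h : ∑ μ, l μ * lo (av j) μ = ∑ μ, ∑ ν, G μ ν * l μ * av j ν :=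
      Finset.sum_congr rfl fun μ _ => by
        simp only [lo]; rw [Finset.mul_sum]
        exact Finset.sum_congr rfl fun ν _ => by ring
    rw [h]
    fin_cases j
    · simpa [av] using hla₁
    · simpa [av] using hla₂
  -- raising a lowered index gives back the vector
  have raise : ∀ (u : Fin 4 → ℝ) (x : Fin 4), ∑ y, Ginv x y * lo u y = u x := by
    intro u x
    calc ∑ y, Ginv x y * lo u y
        = ∑ y, ∑ ν, (Ginv x y * G y ν) * u ν := Finset.sum_congr rfl fun y _ => by
          simp only [lo]; rw [Finset.mul_sum]
          exact Finset.sum_congr rfl fun ν _ => by ring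
      _ = ∑ ν, ∑ y, (Ginv x y * G y ν) * u ν := Finset.sum_comm
      _ = ∑ ν, (1 : Matrix (Fin 4) (Fin 4) ℝ) x ν * u ν := by
          refine Finset.sum_congr rfl fun ν _ => ?_
          rw [← Finset.sum_mul]
          have h : ∑ y, Ginv x y * G y ν = (Ginv * G) x ν := (Matrix.mul_apply).symm
          rw [h, hiG]
      _ = u x := by simp [Matrix.one_apply]
  have fact : ∀ (u v : Fin 4 → ℝ) (x z : Fin 4),
      (∑ y, ∑ w, Ginv x y * Ginv z w * (lo u y * lo v w)) = u x * v z := by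
    intro u v x z
    calc (∑ y, ∑ w, Ginv x y * Ginv z w * (lo u y * lo v w))
        = (∑ y, Ginv x y * lo u y) * (∑ w, Ginv z w * lo v w) := by
          rw [Finset.sum_mul_sum]
          exact Finset.sum_congr rfl fun y _ => Finset.sum_congr rfl fun w _ => by ring
      _ = u x * v z := by rw [raise, raise]
  -- contracting the last index of wdg with l gives 0
  have Z1 : ∀ (k : Fin 2) (b : Fin 4), ∑ x, l x * wdg k b x = 0 := by
    intro k b
    calc ∑ x, l x * wdg k b x
        = ∑ x, (lo l b * (l x * lo (av k) x) - lo (av k) b * (l x * lo l x)) :=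
          Finset.sum_congr rfl fun x _ => by simp only [wdg]; ring
      _ = lo l b * (∑ x, l x * lo (av k) x) - lo (av k) b * (∑ x, l x * lo l x) := by
          simp only [Finset.sum_sub_distrib, ← Finset.mul_sum]
      _ = 0 := by rw [d1, d2 k]; ring
  -- contracting the first index of T with l gives 0
  have K1 : ∀ (b z : Fin 4), ∑ x, l x * T x b z = 0 := by
    intro b z
    calc ∑ x, l x * T x b z
        = ∑ x, (t 0 0 * wdg 0 b z * (l x * lo (av 0) x)
            + t 0 1 * wdg 1 b z * (l x * lo (av 0) x)
            + t 1 0 * wdg 0 b z * (l x * lo (av 1) x)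
            + t 1 1 * wdg 1 b z * (l x * lo (av 1) x)
            + ts 0 * wdg 0 b z * (l x * lo l x)
            + ts 1 * wdg 1 b z * (l x * lo l x)) :=
          Finset.sum_congr rfl fun x _ => by
            simp only [T, Fin.sum_univ_two]; ring
      _ = t 0 0 * wdg 0 b z * (∑ x, l x * lo (av 0) x)
            + t 0 1 * wdg 1 b z * (∑ x, l x * lo (av 0) x)
            + t 1 0 * wdg 0 b z * (∑ x, l x * lo (av 1) x)
            + t 1 1 * wdg 1 b z * (∑ x, l x * lo (av 1) x)
            + ts 0 * wdg 0 b z * (∑ x, l x * lo l x)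
            + ts 1 * wdg 1 b z * (∑ x, l x * lo l x) := by
          simp only [Finset.sum_add_distrib, ← Finset.mul_sum]
      _ = 0 := by rw [d1, d2 0, d2 1]; ring
  -- contracting the last index of T with l gives 0
  have K2 : ∀ (a b : Fin 4), ∑ x, l x * T a b x = 0 := by
    intro a b
    calc ∑ x, l x * T a b x
        = ∑ x, (t 0 0 * lo (av 0) a * (l x * wdg 0 b x)
            + t 0 1 * lo (av 0) a * (l x * wdg 1 b x)
            + t 1 0 * lo (av 1) a * (l x * wdg 0 b x)
            + t 1 1 * lo (av 1) a * (l x * wdg 1 b x)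
            + ts 0 * lo l a * (l x * wdg 0 b x)
            + ts 1 * lo l a * (l x * wdg 1 b x)) :=
          Finset.sum_congr rfl fun x _ => by
            simp only [T, Fin.sum_univ_two]; ring
      _ = t 0 0 * lo (av 0) a * (∑ x, l x * wdg 0 b x)
            + t 0 1 * lo (av 0) a * (∑ x, l x * wdg 1 b x)
            + t 1 0 * lo (av 1) a * (∑ x, l x * wdg 0 b x)
            + t 1 1 * lo (av 1) a * (∑ x, l x * wdg 1 b x)
            + ts 0 * lo l a * (∑ x, l x * wdg 0 b x)
            + ts 1 * lo l a * (∑ x, l x * wdg 1 b x) := by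
          simp only [Finset.sum_add_distrib, ← Finset.mul_sum]
      _ = 0 := by rw [Z1 0 b, Z1 1 b]; ring
  -- the same for Tm (middle index raised)
  have KA : ∀ (ξ0 z : Fin 4), ∑ x, l x * Tm x ξ0 z = 0 := by
    intro ξ0 z
    calc ∑ x, l x * Tm x ξ0 z
        = ∑ x, ∑ y, Ginv ξ0 y * (l x * T x y z) := Finset.sum_congr rfl fun x _ => by
          simp only [Tm]; rw [Finset.mul_sum]
          exact Finset.sum_congr rfl fun y _ => by ring
      _ = ∑ y, ∑ x, Ginv ξ0 y * (l x * T x y z) := Finset.sum_comm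
      _ = 0 := Finset.sum_eq_zero fun y _ => by
          rw [← Finset.mul_sum, K1 y z, mul_zero]
  have KB : ∀ (ξ0 a : Fin 4), ∑ x, l x * Tm a ξ0 x = 0 := by
    intro ξ0 a
    calc ∑ x, l x * Tm a ξ0 x
        = ∑ x, ∑ y, Ginv ξ0 y * (l x * T a y x) := Finset.sum_congr rfl fun x _ => by
          simp only [Tm]; rw [Finset.mul_sum]
          exact Finset.sum_congr rfl fun y _ => by ring
      _ = ∑ y, ∑ x, Ginv ξ0 y * (l x * T a y x) := Finset.sum_comm
      _ = 0 := Finset.sum_eq_zero fun y _ => by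
          rw [← Finset.mul_sum, K2 a y, mul_zero]
  -- Wup2 with first two indices raised, explicitly
  have hW : ∀ (η ζ ξ' : Fin 4), Wup2 η ζ κ ξ' =
      (wc 0 0 * wdg 0 κ ξ' + wc 0 1 * wdg 1 κ ξ') * (l η * av 0 ζ - av 0 η * l ζ)
      + (wc 1 0 * wdg 0 κ ξ' + wc 1 1 * wdg 1 κ ξ') * (l η * av 1 ζ - av 1 η * l ζ) := by
    intro η ζ ξ'
    calc Wup2 η ζ κ ξ'
        = ∑ y, ∑ w,
            ((wc 0 0 * wdg 0 κ ξ' + wc 0 1 * wdg 1 κ ξ')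
                * (Ginv η y * Ginv ζ w * (lo l y * lo (av 0) w))
              - (wc 0 0 * wdg 0 κ ξ' + wc 0 1 * wdg 1 κ ξ')
                * (Ginv η y * Ginv ζ w * (lo (av 0) y * lo l w))
              + ((wc 1 0 * wdg 0 κ ξ' + wc 1 1 * wdg 1 κ ξ')
                * (Ginv η y * Ginv ζ w * (lo l y * lo (av 1) w))
              - (wc 1 0 * wdg 0 κ ξ' + wc 1 1 * wdg 1 κ ξ')
                * (Ginv η y * Ginv ζ w * (lo (av 1) y * lo l w)))) := by
          simp only [Wup2]
          exact Finset.sum_congr rfl fun y _ => Finset.sum_congr rfl fun w _ => by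
            simp only [W, wdg, Fin.sum_univ_two]; ring
      _ = (wc 0 0 * wdg 0 κ ξ' + wc 0 1 * wdg 1 κ ξ')
              * (∑ y, ∑ w, Ginv η y * Ginv ζ w * (lo l y * lo (av 0) w))
            - (wc 0 0 * wdg 0 κ ξ' + wc 0 1 * wdg 1 κ ξ')
              * (∑ y, ∑ w, Ginv η y * Ginv ζ w * (lo (av 0) y * lo l w))
            + ((wc 1 0 * wdg 0 κ ξ' + wc 1 1 * wdg 1 κ ξ')
              * (∑ y, ∑ w, Ginv η y * Ginv ζ w * (lo l y * lo (av 1) w))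
            - (wc 1 0 * wdg 0 κ ξ' + wc 1 1 * wdg 1 κ ξ')
              * (∑ y, ∑ w, Ginv η y * Ginv ζ w * (lo (av 1) y * lo l w))) := by
          simp only [Finset.sum_add_distrib, Finset.sum_sub_distrib, ← Finset.mul_sum]
      _ = (wc 0 0 * wdg 0 κ ξ' + wc 0 1 * wdg 1 κ ξ') * (l η * av 0 ζ)
            - (wc 0 0 * wdg 0 κ ξ' + wc 0 1 * wdg 1 κ ξ') * (av 0 η * l ζ)
            + ((wc 1 0 * wdg 0 κ ξ' + wc 1 1 * wdg 1 κ ξ') * (l η * av 1 ζ)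
            - (wc 1 0 * wdg 0 κ ξ' + wc 1 1 * wdg 1 κ ξ') * (av 1 η * l ζ)) := by
          rw [fact l (av 0) η ζ, fact (av 0) l η ζ, fact l (av 1) η ζ, fact (av 1) l η ζ]
      _ = _ := by ring
  -- generic vanishing of the contraction, for any scalars C0 C1
  have Hgen : ∀ (ξ : Fin 4) (C0 C1 : ℝ),
      (∑ η, ∑ ζ, (C0 * (l η * av 0 ζ - av 0 η * l ζ) + C1 * (l η * av 1 ζ - av 1 η * l ζ))
        * (Tm η ξ ζ - Tm ζ ξ η)) = 0 := by
    intro ξ C0 C1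
    calc (∑ η, ∑ ζ, (C0 * (l η * av 0 ζ - av 0 η * l ζ)
            + C1 * (l η * av 1 ζ - av 1 η * l ζ)) * (Tm η ξ ζ - Tm ζ ξ η))
        = ∑ η, ∑ ζ,
            (((C0 * av 0 ζ + C1 * av 1 ζ) * (l η * Tm η ξ ζ)
              + (-(C0 * av 0 ζ) - C1 * av 1 ζ) * (l η * Tm ζ ξ η))
            + ((-(C0 * av 0 η) - C1 * av 1 η) * (l ζ * Tm η ξ ζ)
              + (C0 * av 0 η + C1 * av 1 η) * (l ζ * Tm ζ ξ η))) :=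
          Finset.sum_congr rfl fun η _ => Finset.sum_congr rfl fun ζ _ => by ring
      _ = (∑ η, ∑ ζ, ((C0 * av 0 ζ + C1 * av 1 ζ) * (l η * Tm η ξ ζ)
              + (-(C0 * av 0 ζ) - C1 * av 1 ζ) * (l η * Tm ζ ξ η)))
          + (∑ η, ∑ ζ, ((-(C0 * av 0 η) - C1 * av 1 η) * (l ζ * Tm η ξ ζ)
              + (C0 * av 0 η + C1 * av 1 η) * (l ζ * Tm ζ ξ η))) := by
          simp only [Finset.sum_add_distrib]
      _ = 0 := by
          have h1 : (∑ η, ∑ ζ, ((C0 * av 0 ζ + C1 * av 1 ζ) * (l η * Tm η ξ ζ)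
              + (-(C0 * av 0 ζ) - C1 * av 1 ζ) * (l η * Tm ζ ξ η))) = 0 := by
            rw [Finset.sum_comm]
            refine Finset.sum_eq_zero fun ζ _ => ?_
            calc (∑ η, ((C0 * av 0 ζ + C1 * av 1 ζ) * (l η * Tm η ξ ζ)
                  + (-(C0 * av 0 ζ) - C1 * av 1 ζ) * (l η * Tm ζ ξ η)))
                = (C0 * av 0 ζ + C1 * av 1 ζ) * (∑ η, l η * Tm η ξ ζ)
                  + (-(C0 * av 0 ζ) - C1 * av 1 ζ) * (∑ η, l η * Tm ζ ξ η) := by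
                  rw [Finset.mul_sum, Finset.mul_sum, ← Finset.sum_add_distrib]
              _ = 0 := by rw [KA ξ ζ, KB ξ ζ]; ring
          have h2 : (∑ η, ∑ ζ, ((-(C0 * av 0 η) - C1 * av 1 η) * (l ζ * Tm η ξ ζ)
              + (C0 * av 0 η + C1 * av 1 η) * (l ζ * Tm ζ ξ η))) = 0 := by
            refine Finset.sum_eq_zero fun η _ => ?_
            calc (∑ ζ, ((-(C0 * av 0 η) - C1 * av 1 η) * (l ζ * Tm η ξ ζ)
                  + (C0 * av 0 η + C1 * av 1 η) * (l ζ * Tm ζ ξ η)))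
                = (-(C0 * av 0 η) - C1 * av 1 η) * (∑ ζ, l ζ * Tm η ξ ζ)
                  + (C0 * av 0 η + C1 * av 1 η) * (∑ ζ, l ζ * Tm ζ ξ η) := by
                  rw [Finset.mul_sum, Finset.mul_sum, ← Finset.sum_add_distrib]
              _ = 0 := by rw [KB ξ η, KA ξ η]; ring
          rw [h1, h2, add_zero]
  have H : ∀ ξ : Fin 4, ∑ η, ∑ ζ, Wup2 η ζ κ ξ * (Tm η ξ ζ - Tm ζ ξ η) = 0 := by
    intro ξ
    calc (∑ η, ∑ ζ, Wup2 η ζ κ ξ * (Tm η ξ ζ - Tm ζ ξ η))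
        = ∑ η, ∑ ζ, ((wc 0 0 * wdg 0 κ ξ + wc 0 1 * wdg 1 κ ξ)
              * (l η * av 0 ζ - av 0 η * l ζ)
            + (wc 1 0 * wdg 0 κ ξ + wc 1 1 * wdg 1 κ ξ)
              * (l η * av 1 ζ - av 1 η * l ζ)) * (Tm η ξ ζ - Tm ζ ξ η) :=
          Finset.sum_congr rfl fun η _ => Finset.sum_congr rfl fun ζ _ => by
            rw [hW η ζ ξ]
      _ = 0 := Hgen ξ _ _
  calc (∑ η, ∑ ζ, ∑ ξ, Wup2 η ζ κ ξ * (Tm η ξ ζ - Tm ζ ξ η))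
      = ∑ η, ∑ ξ, ∑ ζ, Wup2 η ζ κ ξ * (Tm η ξ ζ - Tm ζ ξ η) :=
        Finset.sum_congr rfl fun η _ => Finset.sum_comm
    _ = ∑ ξ, ∑ η, ∑ ζ, Wup2 η ζ κ ξ * (Tm η ξ ζ - Tm ζ ξ η) := Finset.sum_comm
    _ = 0 := Finset.sum_eq_zero fun ξ _ => H ξ
end

section
/- Let A = h(φ) a + k(φ) l where l, a are constant vectors in ℝ⁴ (viewed as constant vector fields on Minkowski-like coordinates with l = (1,0,0,0), a = (0,1,−i,0), φ(x)=x³), and h,k : ℝ → ℂ are differentiable. Then the torsion T := ½ Re(A ⊗ dA), with (dA)_{μν} = ∂_μ A_ν − ∂_ν A_μ (A_ν lowered with the pp-metric g for f ≡ 0), has the form T = Σ_{j,k=1}^2 t_{jk} a_j ⊗ (l∧a_k) + Σ_j t_j l ⊗ (l∧a_j) with t_{jk} symmetric and t₁₁+t₂₂=0, where a₁ = Re a, a₂ = Im a. -/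
/-!
Since `A` depends on `x` only through `φ = x³` and `∂_μ φ = l_μ`, the chain rule gives
`dA = l ∧ A'` with `A' = h' a + k' l`. As `l ∧ l = 0`, the torsion is
`½ Re((h a + k l) ⊗ h' (l ∧ a))`. Expanding `a = a₁ + i a₂`, the `a ⊗ (l ∧ a)` part gives the
quadratic form `ζ ↦ ½ Re (h h' ζ²)` (symmetric and trace-free), the `l ⊗ (l ∧ a)` part the linear
form `ζ ↦ ½ Re (k h' ζ)`.
-/

open Complex

theorem HasDerivAt.fderiv_comp_apply_eq_smul {ι E : Type*} [Fintype ι] [NormedAddCommGroup E]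
    [NormedSpace ℝ E] {g : ℝ → E} {g' : E} (i : ι) {x : ι → ℝ} (hg : HasDerivAt g g' (x i))
    (v : ι → ℝ) :
    fderiv ℝ (fun y : ι → ℝ => g (y i)) x v = v i • g' := by
  rw [show (fun y : ι → ℝ => g (y i)) = g ∘ fun y => y i from rfl,
    (hg.hasFDerivAt.comp x (hasFDerivAt_apply (𝕜 := ℝ) i x)).fderiv]
  simp

/-- The matrix of the quadratic form `ζ ↦ ½ Re (w ζ²)` in the basis `1, i` of `ℂ`. -/
noncomputable def halfReMulSqMatrix (w : ℂ) : Fin 2 → Fin 2 → ℝ :=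
  ![![w.re / 2, -w.im / 2], ![-w.im / 2, -w.re / 2]]

theorem halfReMulSqMatrix_symm (w : ℂ) (j k : Fin 2) :
    halfReMulSqMatrix w j k = halfReMulSqMatrix w k j := by
  fin_cases j <;> fin_cases k <;> rfl

theorem halfReMulSqMatrix_trace (w : ℂ) :
    halfReMulSqMatrix w 0 0 + halfReMulSqMatrix w 1 1 = 0 := by
  simp only [halfReMulSqMatrix, Matrix.cons_val', Matrix.cons_val_zero, Matrix.cons_val_fin_one,
    Matrix.cons_val_one]
  ring

/-- The coefficients of the linear form `ζ ↦ ½ Re (z ζ)` in the basis `1, i` of `ℂ`. -/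
noncomputable def halfReMulVec (z : ℂ) : Fin 2 → ℝ := ![z.re / 2, -z.im / 2]

theorem half_re_mul_wedge {ι : Type*} (l : ι → ℝ) (a : Fin 2 → ι → ℝ) (H K H' K' : ℂ)
    (α μ ν : ι) :
    let ac : ι → ℂ := fun μ => a 0 μ + a 1 μ * I
    (1 / 2) * ((H * ac α + K * l α) *
        (l μ * (H' * ac ν + K' * l ν) - l ν * (H' * ac μ + K' * l μ))).re =
      (∑ j, ∑ k, halfReMulSqMatrix (H * H') j k * a j α * (l μ * a k ν - a k μ * l ν)) +
        ∑ j, halfReMulVec (K * H') j * l α * (l μ * a j ν - a j μ * l ν) := by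
  simp only [halfReMulSqMatrix, halfReMulVec, Fin.sum_univ_two, Matrix.cons_val_zero,
    Matrix.cons_val_one, mul_re, mul_im, add_re, add_im, sub_re, sub_im, ofReal_re, ofReal_im,
    I_re, I_im]
  ring

/-- For A = h(φ)a + k(φ)l with l = (1,0,0,0), a = (0,1,-i,0), φ(x) = x³ (lowered
components l_μ = (0,0,0,1), a_μ = (0,-1,i,0) in the pp-metric with f ≡ 0), the torsion
T := ½ Re(A ⊗ dA) has the form Σ t_{jk} a_j ⊗ (l∧a_k) + Σ t_j l ⊗ (l∧a_j) with t_{jk}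
symmetric and trace-free, where a₁ = Re a, a₂ = Im a. -/
theorem stmt12 (h k : ℝ → ℂ) (hh : Differentiable ℝ h) (hk : Differentiable ℝ k) :
    let lc : Fin 4 → ℂ := ![0, 0, 0, 1]
    let ac : Fin 4 → ℂ := ![0, -1, Complex.I, 0]
    let lr : Fin 4 → ℝ := ![0, 0, 0, 1]
    let ar : Fin 2 → Fin 4 → ℝ := ![fun μ => (ac μ).re, fun μ => (ac μ).im]
    let A : (Fin 4 → ℝ) → Fin 4 → ℂ := fun x ν => h (x 3) * ac ν + k (x 3) * lc ν
    let dA : (Fin 4 → ℝ) → Fin 4 → Fin 4 → ℂ := fun x μ ν =>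
      fderiv ℝ (fun y => A y ν) x (Pi.single μ 1) -
        fderiv ℝ (fun y => A y μ) x (Pi.single ν 1)
    let T : (Fin 4 → ℝ) → Fin 4 → Fin 4 → Fin 4 → ℝ := fun x α μ ν =>
      (1 / 2) * (A x α * dA x μ ν).re
    ∃ t : Fin 2 → Fin 2 → ℝ → ℝ, ∃ s : Fin 2 → ℝ → ℝ,
      (∀ j k' u, t j k' u = t k' j u) ∧ (∀ u, t 0 0 u + t 1 1 u = 0) ∧
      ∀ x α μ ν, T x α μ ν =
        (∑ j, ∑ k', t j k' (x 3) * ar j α * (lr μ * ar k' ν - ar k' μ * lr ν)) +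
          ∑ j, s j (x 3) * lr α * (lr μ * ar j ν - ar j μ * lr ν) := by
  intro lc ac lr ar A dA T
  have hac : ∀ μ, ac μ = ar 0 μ + ar 1 μ * I := fun μ => (re_add_im _).symm
  have hlc : ∀ μ, lc μ = lr μ := by
    intro μ; fin_cases μ <;> simp [lc, lr]
  have hdA : ∀ x μ ν, dA x μ ν =
      lr μ * (deriv h (x 3) * ac ν + deriv k (x 3) * lc ν) -
        lr ν * (deriv h (x 3) * ac μ + deriv k (x 3) * lc μ) := by
    intro x μ ν
    have hA' : ∀ ν v, fderiv ℝ (fun y => A y ν) x v =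
        v 3 • (deriv h (x 3) * ac ν + deriv k (x 3) * lc ν) := fun ν =>
      (((hh _).hasDerivAt.mul_const _).add
        ((hk _).hasDerivAt.mul_const _)).fderiv_comp_apply_eq_smul 3
    have hl : ∀ μ, (Pi.single μ 1 : Fin 4 → ℝ) 3 = lr μ := by
      intro μ; fin_cases μ <;> simp [lr]
    simp only [dA, hA', hl, real_smul]
  refine ⟨fun j k' u => halfReMulSqMatrix (h u * deriv h u) j k',
    fun j u => halfReMulVec (k u * deriv h u) j,
    fun _ _ _ => halfReMulSqMatrix_symm _ _ _, fun _ => halfReMulSqMatrix_trace _, ?_⟩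
  intro x α μ ν
  simp only [T, A, hdA, hlc, hac]
  exact half_re_mul_wedge lr ar _ _ _ _ α μ ν
end

section
/- For the pp-metric with potential f, the curvature tensor R_{αβγδ} computed from the Levi-Civita connection equals −½ (l∧∂)_{αβ}(l∧∂)_{γδ} f, where (l∧∂)_{αβ} applied to f means l_α ∂_β f − (∂_α f) l_β with l_μ = (0,0,0,1). Explicitly, the only nonzero components up to symmetry are R_{3i3j} = −½ ∂_i∂_j f for i,j ∈ {1,2}. -/
set_option maxHeartbeats 0 in
/-- For the pp-metric with potential f, the Levi-Civita curvature tensor satisfies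
R_{αβγδ} = -½ (l∧∂)_{αβ}(l∧∂)_{γδ} f with l_μ = (0,0,0,1); explicitly the only nonzero
components up to symmetry are R_{3i3j} = -½ ∂_i∂_j f, i,j ∈ {1,2}. -/
theorem stmt15 (f : (Fin 4 → ℝ) → ℝ) (hf : ContDiff ℝ (⊤ : ℕ∞) f)
    (h0 : ∀ x, fderiv ℝ f x (Pi.single 0 1) = 0) :
    let pd : Fin 4 → ((Fin 4 → ℝ) → ℝ) → (Fin 4 → ℝ) → ℝ :=
      fun μ F x => fderiv ℝ F x (Pi.single μ 1)
    let pd2 : Fin 4 → Fin 4 → ((Fin 4 → ℝ) → ℝ) → (Fin 4 → ℝ) → ℝ :=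
      fun μ ν F x => pd μ (fun y => pd ν F y) x
    let gm : (Fin 4 → ℝ) → Fin 4 → Fin 4 → ℝ := fun x =>
      ![![0, 0, 0, 1], ![0, -1, 0, 0], ![0, 0, -1, 0], ![1, 0, 0, f x]]
    let ginv : (Fin 4 → ℝ) → Fin 4 → Fin 4 → ℝ := fun x =>
      ![![-f x, 0, 0, 1], ![0, -1, 0, 0], ![0, 0, -1, 0], ![1, 0, 0, 0]]
    let Γ : Fin 4 → Fin 4 → Fin 4 → (Fin 4 → ℝ) → ℝ := fun lam μ ν x =>
      (1 / 2) * ∑ κ, ginv x lam κ *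
        (pd μ (fun y => gm y ν κ) x + pd ν (fun y => gm y μ κ) x
          - pd κ (fun y => gm y μ ν) x)
    let Riem : Fin 4 → Fin 4 → Fin 4 → Fin 4 → (Fin 4 → ℝ) → ℝ :=
      fun κ lam μ ν x => pd μ (Γ κ ν lam) x - pd ν (Γ κ μ lam) x
        + (∑ η, Γ κ μ η x * Γ η ν lam x) - ∑ η, Γ κ ν η x * Γ η μ lam x
    let Rlow : Fin 4 → Fin 4 → Fin 4 → Fin 4 → (Fin 4 → ℝ) → ℝ :=
      fun α β γ δ x => ∑ κ, gm x α κ * Riem κ β γ δ x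
    let lc : Fin 4 → ℝ := ![0, 0, 0, 1]
    (∀ x α β γ δ, Rlow α β γ δ x = -(1 / 2) *
      (lc α * lc γ * pd2 β δ f x - lc α * lc δ * pd2 β γ f x
        - lc β * lc γ * pd2 α δ f x + lc β * lc δ * pd2 α γ f x)) ∧
    (∀ x, ∀ i j : Fin 4, (i = 1 ∨ i = 2) → (j = 1 ∨ j = 2) →
      Rlow 3 i 3 j x = -(1 / 2) * pd2 i j f x) := by
  intro pd pd2 gm ginv Γ Riem Rlow lc
  have hfd : Differentiable ℝ f := hf.differentiable (by simp)
  have hDc : ∀ i : Fin 4, ContDiff ℝ (⊤ : ℕ∞) (fun y => pd i f y) :=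
    fun i => (hf.fderiv_right (by simp)).clm_apply contDiff_const
  have hDd : ∀ (i : Fin 4), Differentiable ℝ (fun y => pd i f y) :=
    fun i => (hDc i).differentiable (by simp)
  have h2d : Differentiable ℝ (fderiv ℝ f) := (hf.fderiv_right (m := (⊤ : ℕ∞)) (by simp)).differentiable (by simp)
  -- flip representation of second derivatives
  have efl : ∀ (v : Fin 4 → ℝ) (x : Fin 4 → ℝ),
      fderiv ℝ (fun y => fderiv ℝ f y v) x = (fderiv ℝ (fderiv ℝ f) x).flip v := by
    intro v x
    rw [show (fun y => fderiv ℝ f y v) = (fun y => (fderiv ℝ f y) ((fun _ => v) y)) from rfl,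
      fderiv_clm_apply (h2d x) (differentiableAt_const v)]
    simp
  have hsym : ∀ (μ ν : Fin 4) x, pd μ (fun y => pd ν f y) x = pd ν (fun y => pd μ f y) x := by
    intro μ ν x
    show fderiv ℝ (fun y => fderiv ℝ f y (Pi.single ν 1)) x (Pi.single μ 1)
      = fderiv ℝ (fun y => fderiv ℝ f y (Pi.single μ 1)) x (Pi.single ν 1)
    rw [efl, efl]
    simp only [ContinuousLinearMap.flip_apply]
    exact second_derivative_symmetric (fun y => (hfd y).hasFDerivAt)
      ((h2d x).hasFDerivAt) (Pi.single μ 1) (Pi.single ν 1)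
  have hpd0 : ∀ x, pd 0 f x = 0 := h0
  -- derivative of a constant multiple of pd i f
  have hA : ∀ (c : ℝ) (i ρ : Fin 4) x,
      pd ρ (fun y => c * pd i f y) x = c * pd ρ (fun y => pd i f y) x := by
    intro c i ρ x
    show fderiv ℝ (fun y => c * pd i f y) x (Pi.single ρ 1) = _
    rw [fderiv_const_mul ((hDd i) x)]
    simp [pd]
  have hz : ∀ (ρ : Fin 4) x, pd ρ (fun y => pd 0 f y) x = 0 := by
    intro ρ x
    have : (fun y => pd 0 f y) = fun _ => (0:ℝ) := funext hpd0
    show fderiv ℝ (fun y => pd 0 f y) x (Pi.single ρ 1) = 0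
    rw [this]
    simp
  have hz' : ∀ (ρ : Fin 4) x, pd 0 (fun y => pd ρ f y) x = 0 := by
    intro ρ x; rw [hsym]; exact hz ρ x
  have hgm : ∀ (μ ν κ : Fin 4) x, pd μ (fun y => gm y ν κ) x
      = if ν = 3 ∧ κ = 3 then pd μ f x else 0 := by
    intro μ ν κ x
    fin_cases ν <;> fin_cases κ <;>
      simp [pd, gm, Matrix.cons_val_zero, Matrix.cons_val_one, Matrix.head_cons,
        Matrix.cons_val_two, Matrix.cons_val_three, Matrix.tail_cons, fderiv_const]
  have hΓ : ∀ lam μ ν x, Γ lam μ ν x =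
      if lam = 3 then 0
      else if lam = 0 then (1/2) * ((if ν = 3 then pd μ f x else 0)
        + (if μ = 3 then pd ν f x else 0) - (if μ = 3 ∧ ν = 3 then pd 3 f x else 0))
      else if μ = 3 ∧ ν = 3 then (1/2) * pd lam f x else 0 := by
    intro lam μ ν x
    fin_cases lam <;> fin_cases μ <;> fin_cases ν <;>
      simp [Γ, Fin.sum_univ_four, hgm, hpd0, ginv, Matrix.cons_val_zero,
        Matrix.cons_val_one, Matrix.head_cons, Matrix.cons_val_two, Matrix.cons_val_three,
        Matrix.tail_cons, Matrix.vecHead, Matrix.vecTail]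
  have hΓfun : ∀ lam μ ν, Γ lam μ ν = fun x =>
      if lam = 3 then 0
      else if lam = 0 then (1/2) * ((if ν = 3 then pd μ f x else 0)
        + (if μ = 3 then pd ν f x else 0) - (if μ = 3 ∧ ν = 3 then pd 3 f x else 0))
      else if μ = 3 ∧ ν = 3 then (1/2) * pd lam f x else 0 :=
    fun lam μ ν => funext (hΓ lam μ ν)
  have hB : ∀ (ρ : Fin 4) x, pd ρ (fun _ => (0:ℝ)) x = 0 := by
    intro ρ x
    show fderiv ℝ (fun _ => (0:ℝ)) x (Pi.single ρ 1) = 0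
    simp
  have hpdΓ : ∀ (ρ lam μ ν : Fin 4) x, pd ρ (Γ lam μ ν) x =
      if lam = 3 then 0
      else if lam = 0 then (1/2) * ((if ν = 3 then pd ρ (fun y => pd μ f y) x else 0)
        + (if μ = 3 then pd ρ (fun y => pd ν f y) x else 0)
        - (if μ = 3 ∧ ν = 3 then pd ρ (fun y => pd 3 f y) x else 0))
      else if μ = 3 ∧ ν = 3 then (1/2) * pd ρ (fun y => pd lam f y) x else 0 := by
    intro ρ lam μ ν x
    rw [hΓfun]
    by_cases hμ : μ = 3 <;> by_cases hν : ν = 3 <;> fin_cases lam <;>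
      simp [hμ, hν, hA, hB, add_sub_cancel_right]
  have h21 : ∀ x, pd 2 (fun y => pd 1 f y) x = pd 1 (fun y => pd 2 f y) x := hsym 2 1
  have h31 : ∀ x, pd 3 (fun y => pd 1 f y) x = pd 1 (fun y => pd 3 f y) x := hsym 3 1
  have h32 : ∀ x, pd 3 (fun y => pd 2 f y) x = pd 2 (fun y => pd 3 f y) x := hsym 3 2
  have main : ∀ x α β γ δ, Rlow α β γ δ x = -(1 / 2) *
      (lc α * lc γ * pd2 β δ f x - lc α * lc δ * pd2 β γ f x
        - lc β * lc γ * pd2 α δ f x + lc β * lc δ * pd2 α γ f x) := by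
    intro x α β γ δ
    fin_cases α <;> fin_cases β <;> fin_cases γ <;> fin_cases δ <;>
      simp [Rlow, Riem, lc, pd2, Fin.sum_univ_four, hΓ, hpdΓ, hpd0, hz, hz', hB, h21, h31, h32,
        gm, Matrix.cons_val_zero, Matrix.cons_val_one, Matrix.head_cons,
        Matrix.cons_val_two, Matrix.cons_val_three, Matrix.tail_cons,
        Matrix.vecHead, Matrix.vecTail] <;> try ring
  refine ⟨main, ?_⟩
  intro x i j hi hj
  have h := main x 3 i 3 j
  rcases hi with rfl | rfl <;> rcases hj with rfl | rfl <;>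
    simpa [lc, Matrix.cons_val_zero, Matrix.cons_val_one, Matrix.head_cons,
      Matrix.cons_val_two, Matrix.cons_val_three, Matrix.tail_cons,
      Matrix.vecHead, Matrix.vecTail] using h
end

section
/- For the pp-metric, the Ricci tensor of the Levi-Civita connection is Ric_{μν} = ½(f₁₁ + f₂₂) l_μ l_ν where l_μ = (0,0,0,1) and f_{ij} := ∂_i∂_j f. In particular the scalar curvature vanishes identically, and Ric = 0 iff f₁₁ + f₂₂ = 0. -/
noncomputable def Gc (l m n : Fin 4) : ℝ :=
  if l = 0 then (if m = 3 ∨ n = 3 then 1/2 else 0)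
  else if (l = 1 ∨ l = 2) ∧ m = 3 ∧ n = 3 then 1/2 else 0

def Gd (l m n : Fin 4) : Fin 4 :=
  if l = 0 then (if n = 3 then m else n) else l

set_option maxHeartbeats 2000000 in
/-- For the pp-metric, the Ricci tensor of the Levi-Civita connection is
Ric_{μν} = ½(f₁₁ + f₂₂) l_μ l_ν with l_μ = (0,0,0,1); the scalar curvature vanishes
identically, and Ric = 0 iff f₁₁ + f₂₂ = 0. -/
theorem stmt16 (f : (Fin 4 → ℝ) → ℝ) (hf : ContDiff ℝ (⊤ : ℕ∞) f)
    (h0 : ∀ x, fderiv ℝ f x (Pi.single 0 1) = 0) :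
    let pd : Fin 4 → ((Fin 4 → ℝ) → ℝ) → (Fin 4 → ℝ) → ℝ :=
      fun μ F x => fderiv ℝ F x (Pi.single μ 1)
    let pd2 : Fin 4 → Fin 4 → ((Fin 4 → ℝ) → ℝ) → (Fin 4 → ℝ) → ℝ :=
      fun μ ν F x => pd μ (fun y => pd ν F y) x
    let gm : (Fin 4 → ℝ) → Fin 4 → Fin 4 → ℝ := fun x =>
      ![![0, 0, 0, 1], ![0, -1, 0, 0], ![0, 0, -1, 0], ![1, 0, 0, f x]]
    let ginv : (Fin 4 → ℝ) → Fin 4 → Fin 4 → ℝ := fun x =>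
      ![![-f x, 0, 0, 1], ![0, -1, 0, 0], ![0, 0, -1, 0], ![1, 0, 0, 0]]
    let Γ : Fin 4 → Fin 4 → Fin 4 → (Fin 4 → ℝ) → ℝ := fun lam μ ν x =>
      (1 / 2) * ∑ κ, ginv x lam κ *
        (pd μ (fun y => gm y ν κ) x + pd ν (fun y => gm y μ κ) x
          - pd κ (fun y => gm y μ ν) x)
    let Riem : Fin 4 → Fin 4 → Fin 4 → Fin 4 → (Fin 4 → ℝ) → ℝ :=
      fun κ lam μ ν x => pd μ (Γ κ ν lam) x - pd ν (Γ κ μ lam) x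
        + (∑ η, Γ κ μ η x * Γ η ν lam x) - ∑ η, Γ κ ν η x * Γ η μ lam x
    let Ric : Fin 4 → Fin 4 → (Fin 4 → ℝ) → ℝ := fun lam ν x => ∑ κ, Riem κ lam κ ν x
    let lc : Fin 4 → ℝ := ![0, 0, 0, 1]
    (∀ x lam ν, Ric lam ν x =
      (1 / 2) * (pd2 1 1 f x + pd2 2 2 f x) * lc lam * lc ν) ∧
    (∀ x, ∑ lam, ∑ ν, ginv x lam ν * Ric lam ν x = 0) ∧
    (∀ x, (∀ lam ν, Ric lam ν x = 0) ↔ pd2 1 1 f x + pd2 2 2 f x = 0) := by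
  intro pd pd2 gm ginv Γ Riem Ric lc
  have hf1 : ContDiff ℝ (⊤ : ℕ∞) (fun x => fderiv ℝ f x) := hf.fderiv_right (by simp)
  have hd : Differentiable ℝ f := hf.differentiable (by simp)
  have hpd_diff : ∀ d : Fin 4, Differentiable ℝ (fun y => fderiv ℝ f y (Pi.single d 1)) :=
    fun d => (hf1.clm_apply contDiff_const).differentiable (by simp)
  have hpd_fderiv : ∀ (d : Fin 4) x w, fderiv ℝ (fun y => fderiv ℝ f y (Pi.single d 1)) x w
      = fderiv ℝ (fderiv ℝ f) x w (Pi.single d 1) := by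
    intro d x w
    rw [fderiv_clm_apply (hf1.differentiable (by simp) x) (differentiableAt_const _)]
    simp
  have hsymm0 : ∀ (d : Fin 4) x,
      fderiv ℝ (fun y => fderiv ℝ f y (Pi.single d 1)) x (Pi.single 0 1) = 0 := by
    intro d x
    rw [hpd_fderiv]
    have hs := second_derivative_symmetric (f' := fderiv ℝ f) (fun y => (hd y).hasFDerivAt)
      ((hf1.differentiable (by simp) x).hasFDerivAt) (Pi.single d 1) (Pi.single 0 1)
    rw [← hs, ← hpd_fderiv]
    have he : (fun y => fderiv ℝ f y (Pi.single (0:Fin 4) 1)) = fun _ => (0:ℝ) := funext h0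
    rw [he]; simp
  have hpdc : ∀ (c : ℝ) (d μ : Fin 4) x,
      fderiv ℝ (fun y => c * fderiv ℝ f y (Pi.single d 1)) x (Pi.single μ 1)
      = c * fderiv ℝ (fun y => fderiv ℝ f y (Pi.single d 1)) x (Pi.single μ 1) := by
    intro c d μ x
    rw [fderiv_const_mul ((hpd_diff d) x)]; simp
  have hpdgm : ∀ (μ n k : Fin 4) x, pd μ (fun y => gm y n k) x
      = if n = 3 ∧ k = 3 then fderiv ℝ f x (Pi.single μ 1) else 0 := by
    intro μ n k x
    fin_cases n <;> fin_cases k <;> simp [pd, gm]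
  have hΓ : ∀ l m n, Γ l m n = fun x => Gc l m n * fderiv ℝ f x (Pi.single (Gd l m n) 1) := by
    intro l m n
    funext x
    simp only [Γ, hpdgm, Fin.sum_univ_four]
    fin_cases l <;> fin_cases m <;> fin_cases n <;>
      simp [ginv, Gc, Gd, h0 x, Matrix.vecHead, Matrix.vecTail] <;> ring
  have hRic : ∀ x lam ν, Ric lam ν x =
      (1 / 2) * (pd2 1 1 f x + pd2 2 2 f x) * lc lam * lc ν := by
    intro x l n
    simp only [Ric, Riem, hΓ, Fin.sum_univ_four, pd, pd2, lc]
    fin_cases l <;> fin_cases n <;>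
      simp [Gc, Gd, h0, hsymm0, hpdc, Matrix.vecHead, Matrix.vecTail] <;> ring_nf
  refine ⟨hRic, ?_, ?_⟩
  · intro x
    simp only [Fin.sum_univ_four, hRic, lc, ginv]
    simp [Matrix.vecHead, Matrix.vecTail]
  · intro x
    constructor
    · intro h
      have h33 := h 3 3
      rw [hRic] at h33
      simp [lc, Matrix.vecHead, Matrix.vecTail] at h33
      linarith
    · intro h l n
      rw [hRic, h]; ring
end
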